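/- Let n ≥ 3 and A₀, A₁, A₂ symmetric n×n matrices satisfying: there exist μ₁, μ₂ with μ₁A₁+μ₂A₂ positive definite, and there exists x⁰ with x⁰ᵀA₁x⁰=1, x⁰ᵀA₂x⁰<1. Let x* be a local non-global minimizer of xᵀA₀x over {x : xᵀA₁x = 1, xᵀA₂x ≤ 1} with multipliers α ∈ R, β > 0 satisfying (A₀+αA₁+βA₂)x* = 0 and x*ᵀA₂x* = 1. Then the matrix A₀+αA₁+βA₂ has exactly one negative eigenvalue. -/

import Mathlib

/-!
Write `G = A₀ + α A₁ + β A₂` and `M = A₁ - A₂`. The problem is homogeneous, so rescaling shows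
that near `x*` the quantity `zᵀ G z + β zᵀ M z = zᵀ A₀ z - (x*ᵀ A₀ x*) zᵀ A₁ z` is nonnegative
wherever `zᵀ M z ≥ 0`. A feasible `y` beating `x*` makes it negative at `y`; hence `G` has a
negative eigenvalue, and `M x* ≠ 0`, since otherwise every `x* + t y` would be admissible.
Along the curves `x* + t w + c t² M x*` with `w ⊥ M x*` the slack `zᵀ M z` is of order `t²`,
positive, and as small as we like, so `G` is positive semidefinite on the hyperplane `(M x*)ᗮ`.
A plane spanned by two eigenvectors with negative eigenvalues would meet that hyperplane.
-/

open Matrix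

/-- The quadratic form `xᵀ A x` on Euclidean space. -/
noncomputable def quadForm {n : ℕ} (A : Matrix (Fin n) (Fin n) ℝ)
    (x : EuclideanSpace ℝ (Fin n)) : ℝ :=
  ∑ i, ∑ j, A i j * x i * x j

open Filter Topology

section QuadraticForm

variable {ι : Type*} [Fintype ι]

lemma dotProduct_mulVec_smul_self (A : Matrix ι ι ℝ) (r : ℝ) (x : ι → ℝ) :
    (r • x) ⬝ᵥ A *ᵥ (r • x) = r ^ 2 * (x ⬝ᵥ A *ᵥ x) := by
  rw [mulVec_smul, dotProduct_smul, smul_dotProduct, smul_eq_mul, smul_eq_mul]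
  ring

lemma dotProduct_mulVec_add_self {A : Matrix ι ι ℝ} (hA : Aᵀ = A) (x u : ι → ℝ) :
    (x + u) ⬝ᵥ A *ᵥ (x + u) = x ⬝ᵥ A *ᵥ x + 2 * (A *ᵥ x ⬝ᵥ u) + u ⬝ᵥ A *ᵥ u := by
  have hsymm : x ⬝ᵥ A *ᵥ u = A *ᵥ x ⬝ᵥ u := by
    rw [dotProduct_mulVec, ← mulVec_transpose, hA]
  rw [mulVec_add, dotProduct_add, add_dotProduct, add_dotProduct, hsymm,
    dotProduct_comm u (A *ᵥ x)]
  ring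

lemma continuous_dotProduct_mulVec_self (A : Matrix ι ι ℝ) :
    Continuous fun x : ι → ℝ => x ⬝ᵥ A *ᵥ x := by
  fun_prop

end QuadraticForm

lemma quadForm_eq_dotProduct {n : ℕ} (A : Matrix (Fin n) (Fin n) ℝ)
    (x : EuclideanSpace ℝ (Fin n)) : quadForm A x = x.ofLp ⬝ᵥ A *ᵥ x.ofLp := by
  simp only [quadForm, dotProduct, mulVec, Finset.mul_sum]
  exact Finset.sum_congr rfl fun i _ => Finset.sum_congr rfl fun j _ => by ring

section Homogeneity

variable {ι : Type*} [Fintype ι] {A₀ A₁ A₂ : Matrix ι ι ℝ} {x₀ : ι → ℝ}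

/-- Rescaling `z` by `(zᵀ A₁ z)^(-1/2)` makes it feasible. -/
lemma eventually_mul_le_of_localMin (hx₀ : x₀ ⬝ᵥ A₁ *ᵥ x₀ = 1)
    (hmin : ∀ᶠ x in 𝓝 x₀, x ⬝ᵥ A₁ *ᵥ x = 1 → x ⬝ᵥ A₂ *ᵥ x ≤ 1 →
      x₀ ⬝ᵥ A₀ *ᵥ x₀ ≤ x ⬝ᵥ A₀ *ᵥ x) :
    ∀ᶠ z in 𝓝 x₀, z ⬝ᵥ A₂ *ᵥ z ≤ z ⬝ᵥ A₁ *ᵥ z →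
      x₀ ⬝ᵥ A₀ *ᵥ x₀ * (z ⬝ᵥ A₁ *ᵥ z) ≤ z ⬝ᵥ A₀ *ᵥ z := by
  set scale : (ι → ℝ) → ℝ := fun z => (√(z ⬝ᵥ A₁ *ᵥ z))⁻¹
  have hscale : ContinuousAt scale x₀ :=
    ((continuous_dotProduct_mulVec_self A₁).sqrt.continuousAt).inv₀ (by simp [hx₀])
  have hnormalize : Tendsto (fun z => scale z • z) (𝓝 x₀) (𝓝 x₀) := by
    have hc : ContinuousAt (fun z => scale z • z) x₀ := hscale.smul continuousAt_id
    simpa [scale, hx₀] using hc.tendsto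
  have hpos : ∀ᶠ z in 𝓝 x₀, 0 < z ⬝ᵥ A₁ *ᵥ z :=
    continuousAt_const.eventually_lt (continuous_dotProduct_mulVec_self A₁).continuousAt
      (by rw [hx₀]; exact one_pos)
  filter_upwards [hnormalize.eventually hmin, hpos] with z hz hz₁ hle
  have hsq : scale z ^ 2 = (z ⬝ᵥ A₁ *ᵥ z)⁻¹ := by
    rw [inv_pow, Real.sq_sqrt hz₁.le]
  simp only [dotProduct_mulVec_smul_self, hsq] at hz
  rw [← le_div_iff₀ hz₁]
  refine (hz (inv_mul_cancel₀ hz₁.ne') ?_).trans_eq (by ring)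
  rw [← div_eq_inv_mul, div_le_one hz₁]
  exact hle

end Homogeneity

lemma tendsto_smul_nhdsNE_zero {E : Type*} [NormedAddCommGroup E] [NormedSpace ℝ E]
    {p : ℝ → E} (hp : Continuous p) : Tendsto (fun t : ℝ => t • p t) (𝓝[≠] 0) (𝓝 0) :=
  ((continuous_id.smul hp).tendsto' 0 0 (zero_smul ℝ _)).mono_left nhdsWithin_le_nhds

section LocalLagrangian

variable {ι : Type*} [Fintype ι]

/-- Local optimality at `x₀` in the displacement `u = z - x₀`: `2 vᵀ u + uᵀ M u` is the slack
`zᵀ M z` when `v = M x₀` and `x₀ᵀ M x₀ = 0`, and `uᵀ G u = zᵀ G z` when `G x₀ = 0`. -/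
def LocalLagrangianNonneg (G M : Matrix ι ι ℝ) (v : ι → ℝ) (β : ℝ) : Prop :=
  ∀ᶠ u in 𝓝 (0 : ι → ℝ), 0 ≤ 2 * (v ⬝ᵥ u) + u ⬝ᵥ M *ᵥ u →
    0 ≤ u ⬝ᵥ G *ᵥ u + β * (2 * (v ⬝ᵥ u) + u ⬝ᵥ M *ᵥ u)

variable {G M : Matrix ι ι ℝ} {v : ι → ℝ} {β : ℝ}

lemma LocalLagrangianNonneg.add_mul_nonneg_of_vec_eq_zero (h : LocalLagrangianNonneg G M v β)
    (hv : v = 0) {w : ι → ℝ} (hw : 0 ≤ w ⬝ᵥ M *ᵥ w) :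
    0 ≤ w ⬝ᵥ G *ᵥ w + β * (w ⬝ᵥ M *ᵥ w) := by
  have hline := tendsto_smul_nhdsNE_zero (continuous_const (y := w))
  obtain ⟨t, ht, ht₀⟩ := ((hline.eventually h).and self_mem_nhdsWithin).exists
  subst hv
  have ht₂ : 0 < t ^ 2 := sq_pos_of_ne_zero ht₀
  simp only [zero_dotProduct, mul_zero, zero_add, dotProduct_mulVec_smul_self] at ht
  have := ht (mul_nonneg ht₂.le hw)
  rw [mul_left_comm, ← mul_add] at this
  exact nonneg_of_mul_nonneg_right this ht₂

/-- Along the curve `u = t w + c t² v` the slack is `t² (2 c vᵀ v + wᵀ M w + O(t))`. -/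
lemma LocalLagrangianNonneg.add_mul_nonneg (h : LocalLagrangianNonneg G M v β) {w : ι → ℝ}
    (hw : v ⬝ᵥ w = 0) {c : ℝ} (hc : 0 < 2 * c * (v ⬝ᵥ v) + w ⬝ᵥ M *ᵥ w) :
    0 ≤ w ⬝ᵥ G *ᵥ w + β * (2 * c * (v ⬝ᵥ v) + w ⬝ᵥ M *ᵥ w) := by
  set p : ℝ → ι → ℝ := fun t => w + (c * t) • v
  have hp : Continuous p := by fun_prop
  set slack : ℝ → ℝ := fun t => 2 * c * (v ⬝ᵥ v) + p t ⬝ᵥ M *ᵥ p t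
  set lagrangian : ℝ → ℝ := fun t => p t ⬝ᵥ G *ᵥ p t + β * slack t
  have hslack : Tendsto slack (𝓝[≠] 0) (𝓝 (slack 0)) :=
    ((by fun_prop : Continuous slack).tendsto 0).mono_left nhdsWithin_le_nhds
  have hlagrangian : Tendsto lagrangian (𝓝[≠] 0) (𝓝 (lagrangian 0)) :=
    ((by fun_prop : Continuous lagrangian).tendsto 0).mono_left nhdsWithin_le_nhds
  have hslack_eq : ∀ t, 2 * (v ⬝ᵥ t • p t) + (t • p t) ⬝ᵥ M *ᵥ (t • p t) = t ^ 2 * slack t := by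
    intro t
    simp only [slack, p, dotProduct_mulVec_smul_self, dotProduct_smul, dotProduct_add, hw,
      smul_eq_mul]
    ring
  suffices 0 ≤ lagrangian 0 by simpa [lagrangian, slack, p] using this
  refine ge_of_tendsto hlagrangian ?_
  filter_upwards [(tendsto_smul_nhdsNE_zero hp).eventually h,
    hslack.eventually_const_lt (by simpa [slack, p] using hc),
    self_mem_nhdsWithin] with t ht hpos ht₀
  have ht₂ : 0 < t ^ 2 := sq_pos_of_ne_zero ht₀
  rw [hslack_eq, dotProduct_mulVec_smul_self] at ht
  have := ht (mul_nonneg ht₂.le hpos.le)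
  rw [mul_left_comm, ← mul_add] at this
  exact nonneg_of_mul_nonneg_right this ht₂

lemma LocalLagrangianNonneg.dotProduct_mulVec_nonneg (h : LocalLagrangianNonneg G M v β)
    (hβ : 0 < β) (hv : v ≠ 0) {w : ι → ℝ} (hw : v ⬝ᵥ w = 0) : 0 ≤ w ⬝ᵥ G *ᵥ w := by
  have hvv : 0 < v ⬝ᵥ v :=
    lt_of_le_of_ne (Finset.sum_nonneg fun k _ => mul_self_nonneg (v k))
      (Ne.symm (dotProduct_self_eq_zero.not.mpr hv))
  refine le_of_forall_pos_le_add fun ε hε => ?_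
  obtain ⟨c, hc⟩ : ∃ c, 2 * c * (v ⬝ᵥ v) + w ⬝ᵥ M *ᵥ w = ε / β :=
    ⟨(ε / β - w ⬝ᵥ M *ᵥ w) / (2 * (v ⬝ᵥ v)), by field_simp; ring⟩
  have := h.add_mul_nonneg hw (hc ▸ div_pos hε hβ)
  rwa [hc, mul_div_cancel₀ _ hβ.ne'] at this

end LocalLagrangian

section Eigenvalues

variable {ι : Type*} [Fintype ι] [DecidableEq ι] {G : Matrix ι ι ℝ}

lemma Matrix.IsHermitian.eigenvectorBasis_dotProduct (hG : G.IsHermitian) (i j : ι) :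
    ⇑(hG.eigenvectorBasis i) ⬝ᵥ ⇑(hG.eigenvectorBasis j) = if i = j then 1 else 0 := by
  rw [← orthonormal_iff_ite.mp hG.eigenvectorBasis.orthonormal i j,
    EuclideanSpace.inner_eq_star_dotProduct, star_trivial, dotProduct_comm]

lemma Matrix.IsHermitian.exists_eigenvalues_neg (hG : G.IsHermitian) {y : ι → ℝ}
    (hy : y ⬝ᵥ G *ᵥ y < 0) : ∃ i, hG.eigenvalues i < 0 := by
  by_contra! hnonneg
  have hG' : G.PosSemidef := hG.posSemidef_iff_eigenvalues_nonneg.mpr fun i => hnonneg i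
  simpa using (hG'.dotProduct_mulVec_nonneg y).trans_lt hy

lemma Matrix.IsHermitian.card_filter_eigenvalues_neg_le_one (hG : G.IsHermitian) (v : ι → ℝ)
    (h : ∀ w, v ⬝ᵥ w = 0 → 0 ≤ w ⬝ᵥ G *ᵥ w) :
    (Finset.univ.filter fun i => hG.eigenvalues i < 0).card ≤ 1 := by
  refine Finset.card_le_one.mpr fun i hi j hj => ?_
  simp only [Finset.mem_filter, Finset.mem_univ, true_and] at hi hj
  by_contra hij
  set e : ι → ι → ℝ := fun k => ⇑(hG.eigenvectorBasis k)
  have hquad : ∀ a b : ℝ, (a • e i + b • e j) ⬝ᵥ G *ᵥ (a • e i + b • e j)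
      = a ^ 2 * hG.eigenvalues i + b ^ 2 * hG.eigenvalues j := by
    intro a b
    simp only [e, mulVec_add, mulVec_smul, hG.mulVec_eigenvectorBasis, dotProduct_add,
      add_dotProduct, dotProduct_smul, smul_dotProduct, hG.eigenvectorBasis_dotProduct,
      if_pos, if_neg hij, if_neg (Ne.symm hij), smul_eq_mul]
    ring
  obtain ⟨a, b, hab, hw⟩ : ∃ a b : ℝ, (a ≠ 0 ∨ b ≠ 0) ∧ v ⬝ᵥ (a • e i + b • e j) = 0 := by
    by_cases hvi : v ⬝ᵥ e i = 0
    · exact ⟨1, 0, Or.inl one_ne_zero, by simp [hvi]⟩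
    · refine ⟨v ⬝ᵥ e j, -(v ⬝ᵥ e i), Or.inr (neg_ne_zero.mpr hvi), ?_⟩
      simp only [dotProduct_add, dotProduct_smul, smul_eq_mul]
      ring
  have := hquad a b ▸ h _ hw
  rcases hab with ha | hb
  · nlinarith [sq_pos_of_ne_zero ha, sq_nonneg b]
  · nlinarith [sq_pos_of_ne_zero hb, sq_nonneg a]

end Eigenvalues

section Lagrangian

variable {ι : Type*} [Fintype ι]

lemma lagrangian_add_mul_slack_eq (A₀ A₁ A₂ : Matrix ι ι ℝ) (α β : ℝ) (z : ι → ℝ) :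
    z ⬝ᵥ (A₀ + α • A₁ + β • A₂) *ᵥ z + β * (z ⬝ᵥ (A₁ - A₂) *ᵥ z)
      = z ⬝ᵥ A₀ *ᵥ z + (α + β) * (z ⬝ᵥ A₁ *ᵥ z) := by
  simp only [add_mulVec, sub_mulVec, smul_mulVec, dotProduct_add, dotProduct_sub,
    dotProduct_smul, smul_eq_mul]
  ring

variable {A₀ A₁ A₂ : Matrix ι ι ℝ} {α β : ℝ} {x₀ : ι → ℝ}

lemma dotProduct_mulVec_eq_neg_add_of_stationary (hx₁ : x₀ ⬝ᵥ A₁ *ᵥ x₀ = 1)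
    (hx₂ : x₀ ⬝ᵥ A₂ *ᵥ x₀ = 1) (hstat : (A₀ + α • A₁ + β • A₂) *ᵥ x₀ = 0) :
    x₀ ⬝ᵥ A₀ *ᵥ x₀ = -(α + β) := by
  have h := lagrangian_add_mul_slack_eq A₀ A₁ A₂ α β x₀
  rw [hstat, sub_mulVec, dotProduct_sub, hx₁, hx₂, dotProduct_zero] at h
  linarith

lemma localLagrangianNonneg_of_localMin
    (hG : (A₀ + α • A₁ + β • A₂)ᵀ = A₀ + α • A₁ + β • A₂) (hM : (A₁ - A₂)ᵀ = A₁ - A₂)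
    (hx₁ : x₀ ⬝ᵥ A₁ *ᵥ x₀ = 1) (hx₂ : x₀ ⬝ᵥ A₂ *ᵥ x₀ = 1)
    (hstat : (A₀ + α • A₁ + β • A₂) *ᵥ x₀ = 0)
    (hmin : ∀ᶠ x in 𝓝 x₀, x ⬝ᵥ A₁ *ᵥ x = 1 → x ⬝ᵥ A₂ *ᵥ x ≤ 1 →
      x₀ ⬝ᵥ A₀ *ᵥ x₀ ≤ x ⬝ᵥ A₀ *ᵥ x) :
    LocalLagrangianNonneg (A₀ + α • A₁ + β • A₂) (A₁ - A₂) ((A₁ - A₂) *ᵥ x₀) β := by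
  have hshift : Tendsto (fun u => x₀ + u) (𝓝 0) (𝓝 x₀) :=
    (continuous_const_add x₀).tendsto' 0 x₀ (add_zero x₀)
  filter_upwards [hshift.eventually (eventually_mul_le_of_localMin hx₁ hmin)] with u hu hslack
  have hGu := dotProduct_mulVec_add_self hG x₀ u
  have hMu := dotProduct_mulVec_add_self hM x₀ u
  rw [hstat, dotProduct_zero, zero_dotProduct] at hGu
  have hx₀M : x₀ ⬝ᵥ (A₁ - A₂) *ᵥ x₀ = 0 := by
    rw [sub_mulVec, dotProduct_sub, hx₁, hx₂, sub_self]
  rw [hx₀M, zero_add] at hMu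
  rw [dotProduct_mulVec_eq_neg_add_of_stationary hx₁ hx₂ hstat] at hu
  have hle := hu (sub_nonneg.mp (by rw [← dotProduct_sub, ← sub_mulVec, hMu]; exact hslack))
  have key := lagrangian_add_mul_slack_eq A₀ A₁ A₂ α β (x₀ + u)
  rw [hGu, hMu] at key
  linarith

end Lagrangian

lemma eventually_nhds_ofLp_of_quadForm {n : ℕ} {A₀ A₁ A₂ : Matrix (Fin n) (Fin n) ℝ}
    {xs : EuclideanSpace ℝ (Fin n)}
    (hloc : ∃ ε > 0, ∀ x : EuclideanSpace ℝ (Fin n),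
      quadForm A₁ x = 1 → quadForm A₂ x ≤ 1 → ‖x - xs‖ < ε →
      quadForm A₀ xs ≤ quadForm A₀ x) :
    ∀ᶠ x in 𝓝 xs.ofLp, x ⬝ᵥ A₁ *ᵥ x = 1 → x ⬝ᵥ A₂ *ᵥ x ≤ 1 →
      xs.ofLp ⬝ᵥ A₀ *ᵥ xs.ofLp ≤ x ⬝ᵥ A₀ *ᵥ x := by
  obtain ⟨ε, hε, hmin⟩ := hloc
  have htoLp : Tendsto (WithLp.toLp 2) (𝓝 xs.ofLp) (𝓝 xs) := by
    simpa using (PiLp.continuous_toLp 2 _).tendsto xs.ofLp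
  filter_upwards [htoLp.eventually (Metric.ball_mem_nhds xs hε)] with x hx hx₁ hx₂
  simpa [quadForm_eq_dotProduct] using
    hmin (WithLp.toLp 2 x) (by simpa [quadForm_eq_dotProduct] using hx₁)
      (by simpa [quadForm_eq_dotProduct] using hx₂) (by simpa [dist_eq_norm] using hx)

theorem stmt14_general {n : ℕ} (A₀ A₁ A₂ : Matrix (Fin n) (Fin n) ℝ)
    (h1 : A₁ᵀ = A₁) (h2 : A₂ᵀ = A₂)
    (xs : EuclideanSpace ℝ (Fin n))
    (hfeas1 : quadForm A₁ xs = 1) (hfeas2 : quadForm A₂ xs = 1)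
    -- local minimizer
    (hloc : ∃ ε > 0, ∀ x : EuclideanSpace ℝ (Fin n),
      quadForm A₁ x = 1 → quadForm A₂ x ≤ 1 → ‖x - xs‖ < ε →
      quadForm A₀ xs ≤ quadForm A₀ x)
    -- but not a global minimizer
    (hnotglob : ∃ x : EuclideanSpace ℝ (Fin n),
      quadForm A₁ x = 1 ∧ quadForm A₂ x ≤ 1 ∧ quadForm A₀ x < quadForm A₀ xs)
    (α β : ℝ) (hβ : 0 < β)
    (hstat : (A₀ + α • A₁ + β • A₂).mulVec (fun i => xs i) = 0)
    (hG : (A₀ + α • A₁ + β • A₂).IsHermitian) :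
    (Finset.univ.filter fun i => hG.eigenvalues i < 0).card = 1 := by
  obtain ⟨y, hy₁, hy₂, hy₀⟩ := hnotglob
  simp only [quadForm_eq_dotProduct] at hfeas1 hfeas2 hy₁ hy₂ hy₀
  have hM : (A₁ - A₂)ᵀ = A₁ - A₂ := by rw [transpose_sub, h1, h2]
  have hcond := localLagrangianNonneg_of_localMin (isHermitian_iff_isSymm.mp hG) hM
    hfeas1 hfeas2 hstat (eventually_nhds_ofLp_of_quadForm hloc)
  have hy_slack : 0 ≤ y.ofLp ⬝ᵥ (A₁ - A₂) *ᵥ y.ofLp := by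
    rw [sub_mulVec, dotProduct_sub]
    linarith
  have hy_descent : y.ofLp ⬝ᵥ (A₀ + α • A₁ + β • A₂) *ᵥ y.ofLp
      + β * (y.ofLp ⬝ᵥ (A₁ - A₂) *ᵥ y.ofLp) < 0 := by
    rw [lagrangian_add_mul_slack_eq, hy₁]
    linarith [dotProduct_mulVec_eq_neg_add_of_stationary hfeas1 hfeas2 hstat]
  have hv : (A₁ - A₂) *ᵥ xs.ofLp ≠ 0 := fun hv =>
    (hcond.add_mul_nonneg_of_vec_eq_zero hv hy_slack).not_gt hy_descent
  refine le_antisymm (hG.card_filter_eigenvalues_neg_le_one _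
    fun w hw => hcond.dotProduct_mulVec_nonneg hβ hv hw) ?_
  obtain ⟨i, hi⟩ :=
    hG.exists_eigenvalues_neg (y := y.ofLp) (by linarith [mul_nonneg hβ.le hy_slack])
  exact Finset.card_pos.mpr ⟨i, by simpa using hi⟩

theorem stmt14 {n : ℕ} (hn : 3 ≤ n) (A₀ A₁ A₂ : Matrix (Fin n) (Fin n) ℝ)
    (h0 : A₀ᵀ = A₀) (h1 : A₁ᵀ = A₁) (h2 : A₂ᵀ = A₂)
    (hC1 : ∃ μ₁ μ₂ : ℝ, ∀ x : Fin n → ℝ, x ≠ 0 → 0 < x ⬝ᵥ (μ₁ • A₁ + μ₂ • A₂).mulVec x)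
    (hC2 : ∃ x0 : Fin n → ℝ, x0 ⬝ᵥ A₁.mulVec x0 = 1 ∧ x0 ⬝ᵥ A₂.mulVec x0 < 1)
    (xs : EuclideanSpace ℝ (Fin n))
    (hfeas1 : quadForm A₁ xs = 1) (hfeas2 : quadForm A₂ xs = 1)
    -- local minimizer
    (hloc : ∃ ε > 0, ∀ x : EuclideanSpace ℝ (Fin n),
      quadForm A₁ x = 1 → quadForm A₂ x ≤ 1 → ‖x - xs‖ < ε →
      quadForm A₀ xs ≤ quadForm A₀ x)
    -- but not a global minimizer
    (hnotglob : ∃ x : EuclideanSpace ℝ (Fin n),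
      quadForm A₁ x = 1 ∧ quadForm A₂ x ≤ 1 ∧ quadForm A₀ x < quadForm A₀ xs)
    (α β : ℝ) (hβ : 0 < β)
    (hstat : (A₀ + α • A₁ + β • A₂).mulVec (fun i => xs i) = 0)
    (hG : (A₀ + α • A₁ + β • A₂).IsHermitian) :
    (Finset.univ.filter fun i => hG.eigenvalues i < 0).card = 1 :=
  stmt14_general A₀ A₁ A₂ h1 h2 xs hfeas1 hfeas2 hloc hnotglob α β hβ hstat hG
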